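/- Let I be an n-element subset of {1, …, 2n} and let σ(k) = 2n+1−k. Then A(e_I) = ± e_{σ(Iᶜ)} (a basis vector up to sign). Moreover σ(Iᶜ) = I if and only if I contains exactly one element of each pair {k, 2n+1−k} for 1 ≤ k ≤ n, and in that case A(e_I) = (−1)^{n+⌊n/2⌋} · e_I. -/

import Mathlib

open Matrix

/-- The set of `n`-element subsets of `{1, …, 2n}` (realized as `Fin (2*n)`), indexing the
standard basis `e_I = e_{i₁} ∧ ⋯ ∧ e_{iₙ}` of the `n`-th exterior power `⋀ⁿ(ℂ^{2n})`. -/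
abbrev Idx (n : ℕ) := {I : Finset (Fin (2 * n)) // I.card = n}

/-- The matrix of the induced linear map `⋀ⁿ(g)` on `⋀ⁿ(ℂ^{2n})` in the standard basis
`{e_I}`: its `(I, J)` entry is the `n × n` minor of `g` with rows `I` and columns `J`
(both taken in increasing order), i.e. the coefficient of `e_I` in `⋀ⁿ(g)(e_J)`. -/
noncomputable def wedgePow (n : ℕ) (g : Matrix (Fin (2 * n)) (Fin (2 * n)) ℂ) :
    Matrix (Idx n) (Idx n) ℂ := fun I J =>
  Matrix.det (Matrix.of fun a b : Fin n =>
    g ((I.1.orderIsoOfFin I.2 a).1) ((J.1.orderIsoOfFin J.2 b).1))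

/-- `qCoeff n I J = q(e_I, e_J)`, the coefficient of `e_1 ∧ ⋯ ∧ e_{2n}` in `e_I ∧ e_J`:
it is `0` unless `J = Iᶜ`, in which case it is the sign `(-1)^{#{(i,j) ∈ I × J : i > j}}`
obtained by sorting the concatenation of the increasing enumerations of `I` and `J`. -/
noncomputable def qCoeff (n : ℕ) (I J : Idx n) : ℂ :=
  if (J : Finset (Fin (2 * n))) = (I : Finset (Fin (2 * n)))ᶜ then
    (-1 : ℂ) ^ (((I.1 ×ˢ J.1).filter fun p => p.2 < p.1).card)
  else 0

/-- The bilinear form `q` on `⋀ⁿ(ℂ^{2n})` defined by `v ∧ w = q(v, w) • e_1 ∧ ⋯ ∧ e_{2n}`,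
written in coordinates with respect to the basis `{e_I}` (a vector of `⋀ⁿ(ℂ^{2n})` is
recorded by its coordinate function `Idx n → ℂ`). -/
noncomputable def q (n : ℕ) (v w : Idx n → ℂ) : ℂ :=
  ∑ I : Idx n, ∑ J : Idx n, v I * w J * qCoeff n I J

/-- The basis vector `e_I` of `⋀ⁿ(ℂ^{2n})`, in coordinates. -/
noncomputable def eVec (n : ℕ) (I : Idx n) : Idx n → ℂ :=
  fun J => if J = I then 1 else 0

/-- The complement `Iᶜ` of an `n`-element subset of `{1, …, 2n}`. -/
def complIdx (n : ℕ) (I : Idx n) : Idx n :=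
  ⟨(I : Finset (Fin (2 * n)))ᶜ, by
    rw [Finset.card_compl, I.2, Fintype.card_fin]; omega⟩

/-- The matrix (in the basis `{e_I}`) of the linear map `S` on `⋀ⁿ(ℂ^{2n})` defined by
`S(e_I) = q(e_{Iᶜ}, e_I) • e_{Iᶜ}`. -/
noncomputable def Smat (n : ℕ) : Matrix (Idx n) (Idx n) ℂ := fun I J =>
  if I = complIdx n J then qCoeff n (complIdx n J) J else 0

/-- The `n × n` matrix `w_n` with entries `1` at positions `(i, n+1-i)` and `0` elsewhere. -/
noncomputable def wnMat (n : ℕ) : Matrix (Fin n) (Fin n) ℂ := fun i j =>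
  if (i : ℕ) + (j : ℕ) + 1 = n then 1 else 0

/-- The `2n × 2n` matrix `J_{2n}` with block form `[[0, wₙ], [-wₙ, 0]]`. -/
noncomputable def JMat (n : ℕ) : Matrix (Fin (2 * n)) (Fin (2 * n)) ℂ :=
  Matrix.reindex (finSumFinEquiv.trans (finCongr (by omega)))
    (finSumFinEquiv.trans (finCongr (by omega)))
    (Matrix.fromBlocks 0 (wnMat n) (-(wnMat n)) 0)

/-- The matrix of the endomorphism `A = S ∘ ⋀ⁿ(J_{2n})` of `⋀ⁿ(ℂ^{2n})`. -/
noncomputable def Amat (n : ℕ) : Matrix (Idx n) (Idx n) ℂ :=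
  Smat n * wedgePow n (JMat n)

/-- The image of a subset of `{1, …, 2n}` under the order-reversal `σ(k) = 2n + 1 - k`
(realized on `Fin (2*n)` as `Fin.rev`), applied to the complement `Iᶜ`. -/
def revComplIdx (n : ℕ) (I : Idx n) : Idx n :=
  ⟨((I : Finset (Fin (2 * n)))ᶜ).image Fin.rev, by
    rw [Finset.card_image_of_injective _ Fin.rev_injective, Finset.card_compl, I.2,
      Fintype.card_fin]; omega⟩

/-!
`J_{2n}` sends `e_j` to `±e_{σ(j)}`, so `⋀ⁿJ_{2n}` sends `e_I` to `±e_{σ(I)}`: the sign is the product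
of the signs of the columns in `I` times `(-1)^(n choose 2)`, the sign of reversing the order of
the `n` wedge factors. Then `S` sends `e_{σ(I)}` to `±e_{σ(I)ᶜ} = ±e_{σ(Iᶜ)}`.

When `σ(Iᶜ) = I`, count positions from `0`. The inversions between `I` and `Iᶜ` together with the
`n choose 2` pairs inside `I` are all pairs `j < i` with `i ∈ I`, so the total exponent is
`∑_{i ∈ I} (i + [i < n]) ≡ ∑_{i ∈ I} (min(i, σ i) + 1) (mod 2)`. Since `I` meets each pair
`{k, σ k}` exactly once, this is `1 + ⋯ + n ≡ n + ⌊n/2⌋`.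
-/

open Finset

lemma det_antidiagonal_one (R : Type*) [CommRing R] (k : ℕ) :
    (Matrix.of fun a b : Fin k => if b = a.rev then (1 : R) else 0).det = (-1) ^ k.choose 2 := by
  induction k with
  | zero => simp
  | succ k ih =>
    rw [det_succ_row_zero, sum_eq_single (Fin.last k)]
    · have hminor : (Matrix.of fun a b : Fin (k + 1) => if b = a.rev then (1 : R) else 0).submatrix
          Fin.succ (Fin.last k).succAbove = Matrix.of fun a b : Fin k => if b = a.rev then 1 else 0 := by
        ext a b
        simp only [submatrix_apply, of_apply, Fin.succAbove_last, Fin.ext_iff, Fin.val_castSucc,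
          Fin.val_rev, Fin.val_succ]
        exact if_congr (by omega) rfl rfl
      rw [hminor, ih, Nat.choose_succ_succ', Nat.choose_one_right, pow_add]
      simp
    · intro b _ hb
      simp [Fin.ext_iff, Fin.val_rev] at hb ⊢
      omega
    · simp

lemma det_antidiagonal {R : Type*} [CommRing R] {k : ℕ} (d : Fin k → R) :
    (Matrix.of fun a b : Fin k => if b = a.rev then d a else 0).det =
      (-1) ^ k.choose 2 * ∏ a, d a := by
  have hfactor : (Matrix.of fun a b : Fin k => if b = a.rev then d a else 0) =
      diagonal d * Matrix.of fun a b : Fin k => if b = a.rev then (1 : R) else 0 := by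
    ext a b
    simp [diagonal_mul]
  rw [hfactor, det_mul, det_diagonal, det_antidiagonal_one, mul_comm]

lemma Finset.orderEmbOfFin_image_rev {m k : ℕ} (s : Finset (Fin m)) (hs : s.card = k)
    (h : (s.image Fin.rev).card = k) (a : Fin k) :
    (s.image Fin.rev).orderEmbOfFin h a = (s.orderEmbOfFin hs a.rev).rev := by
  refine (congrFun (orderEmbOfFin_unique h (fun a => mem_image_of_mem _ (orderEmbOfFin_mem s hs _))
    fun a b hab => ?_) a).symm
  simpa using (s.orderEmbOfFin hs).strictMono (Fin.rev_lt_rev.2 hab)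

lemma card_filter_snd_lt_fst_product_compl_add_choose_two {m : ℕ} (s : Finset (Fin m)) :
    #{p ∈ s ×ˢ sᶜ | p.2 < p.1} + (#s).choose 2 = ∑ i ∈ s, (i : ℕ) := by
  have hchoose : #{p ∈ s ×ˢ s | p.2 < p.1} = (#s).choose 2 := by
    rw [← card_product_filter_lt]
    exact card_equiv (Equiv.prodComm _ _) (by simp [and_comm])
  rw [← hchoose, card_filter, card_filter, sum_product, sum_product, ← sum_add_distrib]
  refine sum_congr rfl fun i _ => ?_
  rw [add_comm, sum_add_sum_compl s (fun j => if j < i then 1 else 0), ← card_filter]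
  simp [filter_gt_eq_Iio]

lemma sum_range_add_one_mod_two (n : ℕ) : (∑ i ∈ range n, (i + 1)) % 2 = (n + n / 2) % 2 := by
  induction n with
  | zero => simp
  | succ m ih =>
    rw [sum_range_succ]
    obtain ⟨q, r, hr, rfl⟩ : ∃ q r, r < 2 ∧ m = 2 * q + r := ⟨m / 2, m % 2, by omega, by omega⟩
    interval_cases r <;> omega

def revIdx (n : ℕ) (I : Idx n) : Idx n :=
  ⟨I.1.image Fin.rev, by rw [card_image_of_injective _ Fin.rev_injective, I.2]⟩

section Idx

variable {n : ℕ}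

lemma mem_revIdx {I : Idx n} {x : Fin (2 * n)} : x ∈ (revIdx n I).1 ↔ x.rev ∈ I.1 := by
  simp [revIdx, Fin.rev_eq_iff]

lemma mem_revComplIdx {I : Idx n} {x : Fin (2 * n)} : x ∈ (revComplIdx n I).1 ↔ x.rev ∉ I.1 := by
  simp [revComplIdx, Fin.rev_eq_iff]

lemma complIdx_complIdx (I : Idx n) : complIdx n (complIdx n I) = I :=
  Subtype.ext (compl_compl _)

lemma complIdx_revIdx (I : Idx n) : complIdx n (revIdx n I) = revComplIdx n I :=
  Subtype.ext <| ext fun _ => by simp [complIdx, mem_revIdx, mem_revComplIdx]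

lemma qCoeff_complIdx_right (I : Idx n) :
    qCoeff n I (complIdx n I) = (-1) ^ #{p ∈ I.1 ×ˢ I.1ᶜ | p.2 < p.1} :=
  if_pos rfl

lemma eVec_eq_single (I : Idx n) : eVec n I = Pi.single I 1 := by
  ext J
  simp [eVec, Pi.single_apply]

lemma Smat_mulVec_eVec (K : Idx n) :
    Smat n *ᵥ eVec n K = qCoeff n (complIdx n K) K • eVec n (complIdx n K) := by
  ext J
  simp [eVec_eq_single, Smat, Pi.single_apply]

section Antidiagonal

variable {g : Matrix (Fin (2 * n)) (Fin (2 * n)) ℂ} (hg : ∀ i j, i ≠ j.rev → g i j = 0)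
include hg

lemma wedgePow_antidiagonal_of_ne_revIdx {I K : Idx n} (hK : K ≠ revIdx n I) :
    wedgePow n g K I = 0 := by
  obtain ⟨r, hrK, hrI⟩ : ∃ r ∈ K.1, r ∉ (revIdx n I).1 := by
    by_contra! hsub
    exact hK (Subtype.ext (eq_of_subset_of_card_le hsub (by rw [K.2, (revIdx n I).2])))
  let a := (K.1.orderIsoOfFin K.2).symm ⟨r, hrK⟩
  refine det_eq_zero_of_row_eq_zero a fun b => hg _ _ ?_
  rw [show ((K.1.orderIsoOfFin K.2) a).1 = r by simp [a]]
  rintro rfl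
  exact hrI (mem_revIdx.2 (by simp))

lemma wedgePow_antidiagonal_revIdx (I : Idx n) :
    wedgePow n g (revIdx n I) I = (-1) ^ n.choose 2 * ∏ i ∈ I.1, g i.rev i := by
  set e := I.1.orderEmbOfFin I.2
  have hminor : (Matrix.of fun a b : Fin n =>
      g ((revIdx n I).1.orderIsoOfFin (revIdx n I).2 a).1 (I.1.orderIsoOfFin I.2 b).1) =
      Matrix.of fun a b => if b = a.rev then g (e a.rev).rev (e a.rev) else 0 := by
    ext a b
    simp only [of_apply, coe_orderIsoOfFin_apply]
    rw [show (revIdx n I).1.orderEmbOfFin (revIdx n I).2 a = (e a.rev).rev from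
      orderEmbOfFin_image_rev _ _ _ _]
    split_ifs with hb
    · rw [hb]
    · exact hg _ _ fun h => hb (e.injective (Fin.rev_injective h)).symm
  rw [wedgePow, hminor, det_antidiagonal]
  congr 1
  rw [← map_orderEmbOfFin_univ I.1 I.2, prod_map]
  exact Fintype.prod_equiv Fin.revPerm _ _ (by simp [e])

lemma wedgePow_antidiagonal_mulVec_eVec (I : Idx n) :
    wedgePow n g *ᵥ eVec n I =
      ((-1) ^ n.choose 2 * ∏ i ∈ I.1, g i.rev i) • eVec n (revIdx n I) := by
  ext K
  rw [eVec_eq_single, mulVec_single_one, eVec_eq_single, Pi.smul_apply, Pi.single_apply]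
  split_ifs with hK
  · rw [hK, col_apply, wedgePow_antidiagonal_revIdx hg, smul_eq_mul, mul_one]
  · rw [col_apply, wedgePow_antidiagonal_of_ne_revIdx hg hK, smul_zero]

end Antidiagonal

lemma JMat_apply (i j : Fin (2 * n)) :
    JMat n i j = if i = j.rev then (if (j : ℕ) < n then -1 else 1) else 0 := by
  set e : Fin n ⊕ Fin n ≃ Fin (2 * n) := finSumFinEquiv.trans (finCongr (by omega))
  obtain ⟨x, rfl⟩ := e.surjective i
  obtain ⟨y, rfl⟩ := e.surjective j
  rw [JMat, reindex_apply, submatrix_apply, e.symm_apply_apply, e.symm_apply_apply]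
  rcases x with a | a <;> rcases y with b | b <;>
    simp [e, wnMat, Fin.ext_iff, Fin.val_rev] <;> (try split_ifs) <;> first | rfl | omega | simp

lemma prod_JMat_rev_apply (s : Finset (Fin (2 * n))) :
    ∏ i ∈ s, JMat n i.rev i = (-1) ^ #{i ∈ s | i.val < n} := by
  simp [JMat_apply, prod_ite]

lemma Amat_mulVec_eVec (I : Idx n) :
    Amat n *ᵥ eVec n I = (-1 : ℂ) ^ (#{p ∈ (revComplIdx n I).1 ×ˢ (revComplIdx n I).1ᶜ | p.2 < p.1} +
      n.choose 2 + #{i ∈ I.1 | i.val < n}) • eVec n (revComplIdx n I) := by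
  have hJ : ∀ i j, i ≠ j.rev → JMat n i j = 0 := fun i j h => by simp [JMat_apply, h]
  have hrev : revIdx n I = complIdx n (revComplIdx n I) := by
    rw [← complIdx_revIdx, complIdx_complIdx]
  rw [Amat, ← mulVec_mulVec, wedgePow_antidiagonal_mulVec_eVec hJ, mulVec_smul, Smat_mulVec_eVec,
    complIdx_revIdx, smul_smul, prod_JMat_rev_apply, hrev, qCoeff_complIdx_right, ← pow_add,
    ← pow_add]
  congr 2
  omega

lemma sum_min_rev_eq_sum_range {M : Type*} [AddCommMonoid M] {s : Finset (Fin (2 * n))}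
    (hs : ∀ k, k ∈ s ↔ k.rev ∉ s) (f : ℕ → M) :
    ∑ i ∈ s, f (min (i : ℕ) i.rev) = ∑ k ∈ range n, f k := by
  refine sum_nbij (fun i => min (i : ℕ) i.rev) (fun i _ => ?_) (fun i hi j hj hij => ?_)
    (fun k hk => ?_) fun _ _ => rfl
  · simp only [mem_range, Fin.val_rev]
    omega
  · by_contra hne
    have hji : j = i.rev := by
      rw [Fin.ext_iff] at hne ⊢
      simp only [Fin.val_rev] at hij ⊢
      omega
    exact (hs j).1 hj (by rwa [hji, Fin.rev_rev, ← mem_coe])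
  · have hkn : k < n := by simpa using hk
    let x : Fin (2 * n) := ⟨k, by omega⟩
    have hmin : min (x : ℕ) x.rev = k := by simp only [x, Fin.val_rev]; omega
    by_cases hx : x ∈ s
    · exact ⟨x, hx, hmin⟩
    · refine ⟨x.rev, not_not.1 (mt (hs x).2 hx), ?_⟩
      simpa only [Fin.rev_rev, min_comm] using hmin

lemma sum_val_add_card_lt_mod_two {s : Finset (Fin (2 * n))} (hs : ∀ k, k ∈ s ↔ k.rev ∉ s) :
    (∑ i ∈ s, (i : ℕ) + #{i ∈ s | i.val < n}) % 2 = (n + n / 2) % 2 := by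
  have hpair : ∀ i : Fin (2 * n),
      ((i : ℕ) + if i.val < n then 1 else 0) % 2 = (min (i : ℕ) i.rev + 1) % 2 := by
    intro i
    simp only [Fin.val_rev]
    split_ifs <;> omega
  rw [card_filter, ← sum_add_distrib, sum_nat_mod, sum_congr rfl fun i _ => hpair i, ← sum_nat_mod,
    sum_min_rev_eq_sum_range hs (· + 1), sum_range_add_one_mod_two]

end Idx

theorem Amat_on_basis_general (n : ℕ) (I : Idx n) :
    (∃ c : ℂ, (c = 1 ∨ c = -1) ∧
      (Amat n).mulVec (eVec n I) = c • eVec n (revComplIdx n I)) ∧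
    (revComplIdx n I = I ↔
      ∀ k : Fin (2 * n), k ∈ (I : Finset (Fin (2 * n))) ↔ k.rev ∉ (I : Finset (Fin (2 * n)))) ∧
    (revComplIdx n I = I →
      (Amat n).mulVec (eVec n I) = ((-1 : ℂ) ^ (n + n / 2)) • eVec n I) := by
  have hsymm : revComplIdx n I = I ↔ ∀ k, k ∈ I.1 ↔ k.rev ∉ I.1 := by
    simp only [Subtype.ext_iff, Finset.ext_iff, mem_revComplIdx]
    exact forall_congr' fun _ => Iff.comm
  refine ⟨⟨_, neg_one_pow_eq_or ℂ _, Amat_mulVec_eVec I⟩, hsymm, fun h => ?_⟩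
  have hpairs := card_filter_snd_lt_fst_product_compl_add_choose_two I.1
  rw [I.2] at hpairs
  rw [Amat_mulVec_eVec, h, hpairs, neg_one_pow_eq_pow_mod_two,
    sum_val_add_card_lt_mod_two (hsymm.1 h), ← neg_one_pow_eq_pow_mod_two]

/-- For an `n`-element subset `I` of `{1, …, 2n}` and `σ(k) = 2n + 1 - k`:
`A(e_I) = ± e_{σ(Iᶜ)}`; moreover `σ(Iᶜ) = I` iff `I` contains exactly one element of each
pair `{k, 2n+1-k}`, and in that case `A(e_I) = (-1)^{n + ⌊n/2⌋} • e_I`. -/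
theorem Amat_on_basis (n : ℕ) (hn : 1 ≤ n) (I : Idx n) :
    (∃ c : ℂ, (c = 1 ∨ c = -1) ∧
      (Amat n).mulVec (eVec n I) = c • eVec n (revComplIdx n I)) ∧
    (revComplIdx n I = I ↔
      ∀ k : Fin (2 * n), k ∈ (I : Finset (Fin (2 * n))) ↔ k.rev ∉ (I : Finset (Fin (2 * n)))) ∧
    (revComplIdx n I = I →
      (Amat n).mulVec (eVec n I) = ((-1 : ℂ) ^ (n + n / 2)) • eVec n I) :=
  Amat_on_basis_general n I
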